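/- arXiv:1409.8556 — 2 statements merged into one kernel-verified Lean document; each statement's English description precedes it below -/
import Mathlib

section
/- Let μ be a Λ-nice measure, i.e., μ(B(x,r)) ≤ Λ r^s for all balls. Let K be an s-dimensional CZ kernel and K_δ its regularization. Then there is a constant C_1 > 0, depending on s, d, α, ‖K‖_*, and Λ, such that for any δ > 0 and y, y' ∈ ℝ^d, | ∫_{ℝ^d} [K_δ(x−y) − K_δ(x−y')] dμ(x) | ≤ C_1 |y−y'|^α / δ^α. -/
open Classical MeasureTheory Metric

/-!
Pointwise, `|K_δ u - K_δ v| ≲ |u - v|^α (max(δ,|u|)^(-s-α) + max(δ,|v|)^(-s-α))`. When `|u - v|`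
is at most `max(δ, min(|u|,|v|))` this follows from `K_δ = (K |·|^(s+α)) · max(δ,|·|)^(-s-α)`,
the Hölder bound on the first factor and the mean value theorem for the second; otherwise both
`|K_δ u|` and `|K_δ v|` are bounded by `max(δ,|·|)^(-s)` with `max(δ,|·|) ≤ 2|u - v|`.
A dyadic decomposition and the growth bound `μ(B(x,r)) ≤ Λ r^s` give
`∫ max(δ,|x - z|)^(-s-α) dμ(x) ≲ Λ δ^(-α)`, and integrating the pointwise bound in `x` with
`u = x - y`, `v = x - y'` proves the estimate.
-/

theorem abs_rpow_neg_sub_rpow_neg_le {p M a b : ℝ} (hp : 0 ≤ p) (hM : 0 < M)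
    (ha : M ≤ a) (hb : M ≤ b) :
    |a ^ (-p) - b ^ (-p)| ≤ p * M ^ (-p - 1) * |a - b| := by
  have hderiv : ∀ x ∈ Set.Ici M,
      HasDerivWithinAt (fun x : ℝ => x ^ (-p)) (-p * x ^ (-p - 1)) (Set.Ici M) x :=
    fun x hx => (Real.hasDerivAt_rpow_const (Or.inl (hM.trans_le hx).ne')).hasDerivWithinAt
  have hbound : ∀ x ∈ Set.Ici M, ‖-p * x ^ (-p - 1)‖ ≤ p * M ^ (-p - 1) := by
    intro x hx
    have hx0 : 0 < x := hM.trans_le hx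
    rw [norm_mul, norm_neg, Real.norm_of_nonneg hp, Real.norm_of_nonneg (by positivity)]
    exact mul_le_mul_of_nonneg_left (Real.rpow_le_rpow_of_nonpos hM hx (by linarith)) hp
  simpa only [Real.norm_eq_abs] using
    (convex_Ici M).norm_image_sub_le_of_norm_hasDerivWithin_le hderiv hbound hb ha

theorem le_rpow_mul_rpow_one_sub {r M α : ℝ} (hr : 0 ≤ r) (hrM : r ≤ M) (hα : α ≤ 1) :
    r ≤ r ^ α * M ^ (1 - α) := by
  calc r = r ^ α * r ^ (1 - α) := by
        rw [← Real.rpow_add' hr (by norm_num), add_sub_cancel, Real.rpow_one]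
    _ ≤ r ^ α * M ^ (1 - α) := by gcongr

theorem rpow_two_mul_le {x α : ℝ} (hx : 0 ≤ x) (hα : α ≤ 1) : (2 * x) ^ α ≤ 2 * x ^ α := by
  rw [Real.mul_rpow zero_le_two hx]
  gcongr
  simpa using Real.rpow_le_rpow_of_exponent_le one_le_two hα

theorem max_le_min_add_of_abs_sub_le {a b r : ℝ} (h : |a - b| ≤ r) : max a b ≤ min a b + r := by
  have := max_sub_min_eq_abs a b
  rw [abs_sub_comm] at this
  linarith

theorem abs_max_norm_sub_max_norm_le {E : Type*} [NormedAddCommGroup E] (δ : ℝ) (u v : E) :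
    |max δ ‖u‖ - max δ ‖v‖| ≤ ‖u - v‖ := by
  rw [max_comm δ, max_comm δ]
  exact (abs_max_sub_max_le_abs _ _ _).trans (abs_norm_sub_norm_le u v)

section Kernel

variable {E : Type*} [NormedAddCommGroup E] [DecidableEq E] (K : E → ℂ) (s α : ℝ)

noncomputable def scaledKernel (w : E) : ℂ :=
  if w = 0 then 0 else K w * ((‖w‖ ^ (s + α) : ℝ) : ℂ)

noncomputable def regKernel (δ : ℝ) (w : E) : ℂ :=
  if w = 0 then 0 else K w * (((‖w‖ / max δ ‖w‖) ^ (s + α) : ℝ) : ℂ)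

variable {K s α}

theorem regKernel_eq_scaledKernel_mul {δ : ℝ} (hδ : 0 < δ) (w : E) :
    regKernel K s α δ w = scaledKernel K s α w * ((max δ ‖w‖ ^ (-(s + α)) : ℝ) : ℂ) := by
  have hm : 0 < max δ ‖w‖ := lt_max_of_lt_left hδ
  unfold regKernel scaledKernel
  split_ifs
  · simp
  · rw [Real.div_rpow (norm_nonneg _) hm.le, div_eq_mul_inv, ← Real.rpow_neg hm.le]
    push_cast
    ring

theorem norm_scaledKernel_le (hKbd : ∀ x : E, x ≠ 0 → ‖K x‖ ≤ (‖x‖ ^ s)⁻¹) (w : E) :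
    ‖scaledKernel K s α w‖ ≤ ‖w‖ ^ α := by
  unfold scaledKernel
  split_ifs with hw
  · simp [Real.rpow_nonneg]
  · have hn : 0 < ‖w‖ := norm_pos_iff.2 hw
    rw [norm_mul, Complex.norm_real, Real.norm_of_nonneg (by positivity), Real.rpow_add hn]
    calc ‖K w‖ * (‖w‖ ^ s * ‖w‖ ^ α) ≤ (‖w‖ ^ s)⁻¹ * (‖w‖ ^ s * ‖w‖ ^ α) := by
          gcongr
          exact hKbd w hw
      _ = ‖w‖ ^ α := by field_simp

theorem norm_regKernel_le (hα : 0 ≤ α) (hKbd : ∀ x : E, x ≠ 0 → ‖K x‖ ≤ (‖x‖ ^ s)⁻¹)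
    {δ : ℝ} (hδ : 0 < δ) (w : E) :
    ‖regKernel K s α δ w‖ ≤ max δ ‖w‖ ^ (-s) := by
  have hm : 0 < max δ ‖w‖ := lt_max_of_lt_left hδ
  rw [regKernel_eq_scaledKernel_mul hδ, norm_mul, Complex.norm_real,
    Real.norm_of_nonneg (by positivity)]
  calc ‖scaledKernel K s α w‖ * max δ ‖w‖ ^ (-(s + α))
      ≤ max δ ‖w‖ ^ α * max δ ‖w‖ ^ (-(s + α)) := by
        gcongr
        exact (norm_scaledKernel_le hKbd w).trans
          (Real.rpow_le_rpow (norm_nonneg _) (le_max_right _ _) hα)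
    _ = max δ ‖w‖ ^ (-s) := by rw [← Real.rpow_add hm]; ring_nf

theorem norm_regKernel_le_mul_rpow (hα0 : 0 ≤ α) (hα1 : α ≤ 1)
    (hKbd : ∀ x : E, x ≠ 0 → ‖K x‖ ≤ (‖x‖ ^ s)⁻¹) {δ : ℝ} (hδ : 0 < δ) {w : E} {R : ℝ}
    (hR : max δ ‖w‖ ≤ 2 * R) :
    ‖regKernel K s α δ w‖ ≤ 2 * R ^ α * max δ ‖w‖ ^ (-(s + α)) := by
  have hm : 0 < max δ ‖w‖ := lt_max_of_lt_left hδ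
  calc ‖regKernel K s α δ w‖ ≤ max δ ‖w‖ ^ (-s) := norm_regKernel_le hα0 hKbd hδ w
    _ = max δ ‖w‖ ^ α * max δ ‖w‖ ^ (-(s + α)) := by rw [← Real.rpow_add hm]; ring_nf
    _ ≤ (2 * R) ^ α * max δ ‖w‖ ^ (-(s + α)) := by gcongr
    _ ≤ 2 * R ^ α * max δ ‖w‖ ^ (-(s + α)) := by
        gcongr
        exact rpow_two_mul_le (by linarith) hα1

/-- Writing `regKernel = scaledKernel · max δ ‖·‖ ^ (-(s + α))`, the first factor contributes its
Hölder bound and the second its Lipschitz constant on `[min (max δ ‖u‖) (max δ ‖v‖), ∞)`. -/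
theorem norm_regKernel_sub_le_of_le_min {Kstar : ℝ} (hs : 0 ≤ s) (hα0 : 0 ≤ α) (hα1 : α ≤ 1)
    (hKstar : 0 ≤ Kstar) (hKbd : ∀ x : E, x ≠ 0 → ‖K x‖ ≤ (‖x‖ ^ s)⁻¹)
    (hKsm : ∀ u v : E, ‖scaledKernel K s α u - scaledKernel K s α v‖ ≤ Kstar * ‖u - v‖ ^ α)
    {δ : ℝ} (hδ : 0 < δ) {u v : E} (h : ‖u - v‖ ≤ min (max δ ‖u‖) (max δ ‖v‖)) :
    ‖regKernel K s α δ u - regKernel K s α δ v‖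
      ≤ (Kstar + 2 * (s + α)) * ‖u - v‖ ^ α * min (max δ ‖u‖) (max δ ‖v‖) ^ (-(s + α)) := by
  set r := ‖u - v‖
  set a := max δ ‖u‖
  set b := max δ ‖v‖
  set M := min a b
  have hM : 0 < M := lt_min (lt_max_of_lt_left hδ) (lt_max_of_lt_left hδ)
  have hab : |a - b| ≤ r := abs_max_norm_sub_max_norm_le δ u v
  have hbM : b ≤ 2 * M := by
    have := max_le_min_add_of_abs_sub_le hab
    linarith [le_max_right a b]
  have hsplit : regKernel K s α δ u - regKernel K s α δ v
      = (scaledKernel K s α u - scaledKernel K s α v) * ((a ^ (-(s + α)) : ℝ) : ℂ)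
        + scaledKernel K s α v * ((a ^ (-(s + α)) - b ^ (-(s + α)) : ℝ) : ℂ) := by
    rw [regKernel_eq_scaledKernel_mul hδ, regKernel_eq_scaledKernel_mul hδ]
    push_cast
    ring
  have hterm1 : ‖(scaledKernel K s α u - scaledKernel K s α v) * ((a ^ (-(s + α)) : ℝ) : ℂ)‖
      ≤ Kstar * r ^ α * M ^ (-(s + α)) := by
    rw [norm_mul, Complex.norm_real, Real.norm_of_nonneg (by positivity)]
    exact mul_le_mul (hKsm u v) (Real.rpow_le_rpow_of_nonpos hM (min_le_left a b) (by linarith))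
      (by positivity) (by positivity)
  have hterm2 : ‖scaledKernel K s α v * ((a ^ (-(s + α)) - b ^ (-(s + α)) : ℝ) : ℂ)‖
      ≤ 2 * (s + α) * r ^ α * M ^ (-(s + α)) := by
    rw [norm_mul, Complex.norm_real, Real.norm_eq_abs]
    have hv : ‖scaledKernel K s α v‖ ≤ 2 * M ^ α :=
      calc ‖scaledKernel K s α v‖ ≤ ‖v‖ ^ α := norm_scaledKernel_le hKbd v
        _ ≤ (2 * M) ^ α := Real.rpow_le_rpow (norm_nonneg v) ((le_max_right δ _).trans hbM) hα0
        _ ≤ 2 * M ^ α := rpow_two_mul_le hM.le hα1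
    have hlip : |a ^ (-(s + α)) - b ^ (-(s + α))| ≤ (s + α) * M ^ (-(s + α) - 1) * r :=
      (abs_rpow_neg_sub_rpow_neg_le (by linarith) hM (min_le_left a b) (min_le_right a b)).trans
        (by gcongr)
    calc ‖scaledKernel K s α v‖ * |a ^ (-(s + α)) - b ^ (-(s + α))|
        ≤ 2 * M ^ α * ((s + α) * M ^ (-(s + α) - 1) * r) := by gcongr
      _ ≤ 2 * M ^ α * ((s + α) * M ^ (-(s + α) - 1) * (r ^ α * M ^ (1 - α))) := by
          gcongr
          exact le_rpow_mul_rpow_one_sub (norm_nonneg _) h hα1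
      _ = 2 * (s + α) * r ^ α * (M ^ α * M ^ (-(s + α) - 1) * M ^ (1 - α)) := by ring
      _ = 2 * (s + α) * r ^ α * M ^ (-(s + α)) := by
          rw [← Real.rpow_add hM, ← Real.rpow_add hM]
          ring_nf
  calc ‖regKernel K s α δ u - regKernel K s α δ v‖
      ≤ Kstar * r ^ α * M ^ (-(s + α)) + 2 * (s + α) * r ^ α * M ^ (-(s + α)) := by
        rw [hsplit]
        exact (norm_add_le _ _).trans (add_le_add hterm1 hterm2)
    _ = (Kstar + 2 * (s + α)) * r ^ α * M ^ (-(s + α)) := by ring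

theorem norm_regKernel_sub_le {Kstar : ℝ} (hs : 0 ≤ s) (hα0 : 0 ≤ α) (hα1 : α ≤ 1)
    (hKstar : 0 ≤ Kstar) (hKbd : ∀ x : E, x ≠ 0 → ‖K x‖ ≤ (‖x‖ ^ s)⁻¹)
    (hKsm : ∀ u v : E, ‖scaledKernel K s α u - scaledKernel K s α v‖ ≤ Kstar * ‖u - v‖ ^ α)
    {δ : ℝ} (hδ : 0 < δ) (u v : E) :
    ‖regKernel K s α δ u - regKernel K s α δ v‖
      ≤ (2 + Kstar + 2 * (s + α)) * ‖u - v‖ ^ α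
        * (max δ ‖u‖ ^ (-(s + α)) + max δ ‖v‖ ^ (-(s + α))) := by
  set r := ‖u - v‖
  set a := max δ ‖u‖
  set b := max δ ‖v‖
  have ha : 0 < a := lt_max_of_lt_left hδ
  have hb : 0 < b := lt_max_of_lt_left hδ
  rcases le_or_gt r (min a b) with hclose | hfar
  · refine (norm_regKernel_sub_le_of_le_min hs hα0 hα1 hKstar hKbd hKsm hδ hclose).trans ?_
    have hmin : min a b ^ (-(s + α)) ≤ a ^ (-(s + α)) + b ^ (-(s + α)) := by
      have := Real.rpow_nonneg ha.le (-(s + α))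
      have := Real.rpow_nonneg hb.le (-(s + α))
      rcases min_choice a b with h | h <;> rw [h] <;> linarith
    calc (Kstar + 2 * (s + α)) * r ^ α * min a b ^ (-(s + α))
        ≤ (Kstar + 2 * (s + α)) * r ^ α * (a ^ (-(s + α)) + b ^ (-(s + α))) := by gcongr
      _ ≤ (2 + Kstar + 2 * (s + α)) * r ^ α * (a ^ (-(s + α)) + b ^ (-(s + α))) := by
          gcongr
          linarith
  · have hmax : max a b ≤ 2 * r := by
      linarith [max_le_min_add_of_abs_sub_le (abs_max_norm_sub_max_norm_le δ u v)]
    have hu := norm_regKernel_le_mul_rpow hα0 hα1 hKbd hδ ((le_max_left a b).trans hmax)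
    have hv := norm_regKernel_le_mul_rpow hα0 hα1 hKbd hδ ((le_max_right a b).trans hmax)
    calc ‖regKernel K s α δ u - regKernel K s α δ v‖
        ≤ 2 * r ^ α * a ^ (-(s + α)) + 2 * r ^ α * b ^ (-(s + α)) :=
          (norm_sub_le _ _).trans (add_le_add hu hv)
      _ ≤ (2 + Kstar + 2 * (s + α)) * r ^ α * (a ^ (-(s + α)) + b ^ (-(s + α))) := by
          have : 0 ≤ (Kstar + 2 * (s + α)) * r ^ α * (a ^ (-(s + α)) + b ^ (-(s + α))) := by
            positivity
          linarith

end Kernel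

theorem rpow_neg_two_pow_mul_mul_rpow {δ s α : ℝ} (hδ : 0 < δ) (j : ℕ) :
    (2 ^ j * δ) ^ (-(s + α)) * (2 ^ (j + 1) * δ) ^ s = (2 ^ (-α)) ^ j * (2 ^ s / δ ^ α) := by
  have hx : 0 < (2 : ℝ) ^ j * δ := by positivity
  rw [pow_succ, mul_right_comm, Real.mul_rpow hx.le zero_le_two, ← mul_assoc,
    ← Real.rpow_add hx, show -(s + α) + s = -α by ring, Real.mul_rpow (by positivity) hδ.le,
    Real.rpow_pow_comm zero_le_two, Real.rpow_neg hδ.le]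
  ring

section Measure

variable {F : Type*} [NormedAddCommGroup F] [MeasurableSpace F] [OpensMeasurableSpace F]

/-- Dyadic decomposition: `max δ ‖x - z‖ ^ (-(s + α))` is dominated by
`∑ j, (2 ^ j δ) ^ (-(s + α)) · 1_{B(z, 2 ^ (j + 1) δ)}`, and the upper density bound makes the
resulting series geometric with ratio `2 ^ (-α)`. -/
theorem lintegral_max_norm_sub_rpow_neg_le {s α Λ δ : ℝ} (hs : 0 ≤ s) (hα : 0 < α) (hδ : 0 < δ)
    {μ : Measure F} (hμ : ∀ (x : F) (r : ℝ), 0 < r → μ (ball x r) ≤ ENNReal.ofReal (Λ * r ^ s))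
    (z : F) :
    ∫⁻ x, ENNReal.ofReal (max δ ‖x - z‖ ^ (-(s + α))) ∂μ
      ≤ ENNReal.ofReal (Λ * 2 ^ s / (1 - 2 ^ (-α)) / δ ^ α) := by
  have hq0 : (0 : ℝ) ≤ 2 ^ (-α) := by positivity
  have hq1 : (2 : ℝ) ^ (-α) < 1 := Real.rpow_lt_one_of_one_lt_of_neg one_lt_two (neg_neg_of_pos hα)
  set c : ℕ → ℝ := fun j => (2 ^ j * δ) ^ (-(s + α))
  have hdom : ∀ x, ENNReal.ofReal (max δ ‖x - z‖ ^ (-(s + α)))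
      ≤ ∑' j, (ball z (2 ^ (j + 1) * δ)).indicator (fun _ => ENNReal.ofReal (c j)) x := by
    intro x
    obtain ⟨j, hj, hj1⟩ := exists_nat_pow_near
      ((one_le_div hδ).2 (le_max_left δ ‖x - z‖)) one_lt_two
    rw [le_div_iff₀ hδ] at hj
    rw [div_lt_iff₀ hδ] at hj1
    have hx : x ∈ ball z (2 ^ (j + 1) * δ) := by
      rw [mem_ball, dist_eq_norm]
      exact (le_max_right _ _).trans_lt hj1
    refine le_trans ?_ (ENNReal.le_tsum j)
    rw [Set.indicator_of_mem hx]
    exact ENNReal.ofReal_le_ofReal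
      (Real.rpow_le_rpow_of_nonpos (by positivity) hj (by linarith))
  calc ∫⁻ x, ENNReal.ofReal (max δ ‖x - z‖ ^ (-(s + α))) ∂μ
      ≤ ∫⁻ x, ∑' j, (ball z (2 ^ (j + 1) * δ)).indicator (fun _ => ENNReal.ofReal (c j)) x ∂μ :=
        lintegral_mono hdom
    _ = ∑' j, ENNReal.ofReal (c j) * μ (ball z (2 ^ (j + 1) * δ)) := by
        rw [lintegral_tsum fun j => (measurable_const.indicator measurableSet_ball).aemeasurable]
        simp only [lintegral_indicator_const measurableSet_ball]
    _ ≤ ∑' j, ENNReal.ofReal (c j * (Λ * (2 ^ (j + 1) * δ) ^ s)) := by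
        gcongr with j
        rw [ENNReal.ofReal_mul (by positivity)]
        gcongr
        exact hμ z _ (by positivity)
    _ = ∑' j, ENNReal.ofReal (2 ^ (-α)) ^ j * ENNReal.ofReal (Λ * 2 ^ s / δ ^ α) := by
        congr 1 with j
        rw [← ENNReal.ofReal_pow hq0, ← ENNReal.ofReal_mul (by positivity), mul_left_comm,
          rpow_neg_two_pow_mul_mul_rpow hδ]
        ring_nf
    _ = ENNReal.ofReal (Λ * 2 ^ s / (1 - 2 ^ (-α)) / δ ^ α) := by
        rw [ENNReal.tsum_mul_right, ENNReal.tsum_geometric, ← ENNReal.ofReal_one,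
          ← ENNReal.ofReal_sub _ hq0, ← ENNReal.ofReal_inv_of_pos (by linarith),
          ← ENNReal.ofReal_mul (inv_nonneg.2 (by linarith))]
        congr 1
        ring

theorem norm_integral_regKernel_sub_le [DecidableEq F] {K : F → ℂ} {s α Kstar Λ : ℝ}
    (hs : 0 ≤ s) (hα0 : 0 < α) (hα1 : α ≤ 1) (hKstar : 0 ≤ Kstar) (hΛ : 0 ≤ Λ) {μ : Measure F}
    (hμ : ∀ (x : F) (r : ℝ), 0 < r → μ (ball x r) ≤ ENNReal.ofReal (Λ * r ^ s))
    (hKbd : ∀ x : F, x ≠ 0 → ‖K x‖ ≤ (‖x‖ ^ s)⁻¹)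
    (hKsm : ∀ u v : F, ‖scaledKernel K s α u - scaledKernel K s α v‖ ≤ Kstar * ‖u - v‖ ^ α)
    {δ : ℝ} (hδ : 0 < δ) (y y' : F) :
    ‖∫ x, (regKernel K s α δ (x - y) - regKernel K s α δ (x - y')) ∂μ‖
      ≤ 2 * (2 + Kstar + 2 * (s + α)) * (Λ * 2 ^ s / (1 - 2 ^ (-α))) * ‖y - y'‖ ^ α / δ ^ α := by
  set A := 2 + Kstar + 2 * (s + α)
  set B := Λ * 2 ^ s / (1 - 2 ^ (-α))
  have hA : 0 ≤ A := by positivity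
  have hB : 0 ≤ B := div_nonneg (by positivity)
    (sub_nonneg.2 (Real.rpow_le_one_of_one_le_of_nonpos one_le_two (by linarith)))
  set Φ : F → F → ENNReal := fun z x => ENNReal.ofReal (max δ ‖x - z‖ ^ (-(s + α)))
  have hΦ : ∀ z, Measurable (Φ z) := fun z =>
    ((measurable_const.max (continuous_id.sub continuous_const).norm.measurable).pow_const
      _).ennreal_ofReal
  have hpt : ∀ x, ENNReal.ofReal ‖regKernel K s α δ (x - y) - regKernel K s α δ (x - y')‖
      ≤ ENNReal.ofReal (A * ‖y - y'‖ ^ α) * (Φ y x + Φ y' x) := by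
    intro x
    have h := norm_regKernel_sub_le hs hα0.le hα1 hKstar hKbd hKsm hδ (x - y) (x - y')
    rw [sub_sub_sub_cancel_left, norm_sub_rev y'] at h
    rw [← ENNReal.ofReal_add (by positivity) (by positivity),
      ← ENNReal.ofReal_mul (by positivity)]
    exact ENNReal.ofReal_le_ofReal h
  refine (norm_integral_le_lintegral_norm _).trans
    (ENNReal.toReal_le_of_le_ofReal (by positivity) ?_)
  calc ∫⁻ x, ENNReal.ofReal ‖regKernel K s α δ (x - y) - regKernel K s α δ (x - y')‖ ∂μ
      ≤ ∫⁻ x, ENNReal.ofReal (A * ‖y - y'‖ ^ α) * (Φ y x + Φ y' x) ∂μ := lintegral_mono hpt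
    _ = ENNReal.ofReal (A * ‖y - y'‖ ^ α) * ((∫⁻ x, Φ y x ∂μ) + ∫⁻ x, Φ y' x ∂μ) := by
        rw [lintegral_const_mul' _ _ ENNReal.ofReal_ne_top, lintegral_add_left (hΦ y)]
    _ ≤ ENNReal.ofReal (A * ‖y - y'‖ ^ α)
          * (ENNReal.ofReal (B / δ ^ α) + ENNReal.ofReal (B / δ ^ α)) := by
        gcongr <;> exact lintegral_max_norm_sub_rpow_neg_le hs hα0 hδ hμ _
    _ = ENNReal.ofReal (2 * A * B * ‖y - y'‖ ^ α / δ ^ α) := by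
        rw [← ENNReal.ofReal_add (by positivity) (by positivity),
          ← ENNReal.ofReal_mul (by positivity)]
        congr 1
        ring

end Measure

theorem stmt7_general (d : ℕ) (s α Kstar Λ : ℝ) (hs : 0 < s)
    (hα0 : 0 < α) (hα1 : α ≤ 1) (hKstar : 0 < Kstar) (hΛ : 0 < Λ)
    (μ : Measure (EuclideanSpace ℝ (Fin d)))
    (hμ : ∀ (x : EuclideanSpace ℝ (Fin d)) (r : ℝ), 0 < r →
      μ (ball x r) ≤ ENNReal.ofReal (Λ * r ^ s))
    (K : EuclideanSpace ℝ (Fin d) → ℂ)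
    (hKbd : ∀ x, x ≠ 0 → ‖K x‖ ≤ (‖x‖ ^ s)⁻¹)
    (hKsm : ∀ x y, ‖(if x = 0 then 0 else K x * ((‖x‖ ^ (s + α) : ℝ) : ℂ))
        - (if y = 0 then 0 else K y * ((‖y‖ ^ (s + α) : ℝ) : ℂ))‖ ≤ Kstar * ‖x - y‖ ^ α) :
    ∃ C₁ : ℝ, 0 < C₁ ∧
      ∀ (δ : ℝ), 0 < δ → ∀ y y' : EuclideanSpace ℝ (Fin d),
        ‖∫ x, ((if x - y = 0 then 0 else
              K (x - y) * (((‖x - y‖ / max δ ‖x - y‖) ^ (s + α) : ℝ) : ℂ))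
            - (if x - y' = 0 then 0 else
              K (x - y') * (((‖x - y'‖ / max δ ‖x - y'‖) ^ (s + α) : ℝ) : ℂ))) ∂μ‖
          ≤ C₁ * ‖y - y'‖ ^ α / δ ^ α := by
  have hq : 0 < 1 - (2 : ℝ) ^ (-α) :=
    sub_pos.2 (Real.rpow_lt_one_of_one_lt_of_neg one_lt_two (neg_neg_of_pos hα0))
  exact ⟨2 * (2 + Kstar + 2 * (s + α)) * (Λ * 2 ^ s / (1 - 2 ^ (-α))), by positivity,
    fun δ hδ y y' =>
      norm_integral_regKernel_sub_le hs.le hα0 hα1 hKstar.le hΛ.le hμ hKbd hKsm hδ y y'⟩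

/-- For a `Λ`-nice measure `μ` and the regularized kernels `K_δ` of an
`s`-dimensional CZ kernel, there is `C₁ > 0` (depending on `s,d,α,‖K‖_*,Λ`) such that for
all `δ > 0` and `y, y'`, `|∫ [K_δ(x−y) − K_δ(x−y')] dμ(x)| ≤ C₁|y−y'|^α/δ^α`. -/
theorem stmt7 (d : ℕ) (hd : 2 ≤ d) (s α Kstar Λ : ℝ) (hs : 0 < s) (hsd : s < d)
    (hα0 : 0 < α) (hα1 : α ≤ 1) (hKstar : 0 < Kstar) (hΛ : 0 < Λ)
    (μ : Measure (EuclideanSpace ℝ (Fin d)))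
    (hμ : ∀ (x : EuclideanSpace ℝ (Fin d)) (r : ℝ), 0 < r →
      μ (ball x r) ≤ ENNReal.ofReal (Λ * r ^ s))
    (K : EuclideanSpace ℝ (Fin d) → ℂ)
    (hKbd : ∀ x, x ≠ 0 → ‖K x‖ ≤ (‖x‖ ^ s)⁻¹)
    (hKodd : ∀ x, K (-x) = -K x)
    (hKsm : ∀ x y, ‖(if x = 0 then 0 else K x * ((‖x‖ ^ (s + α) : ℝ) : ℂ))
        - (if y = 0 then 0 else K y * ((‖y‖ ^ (s + α) : ℝ) : ℂ))‖ ≤ Kstar * ‖x - y‖ ^ α) :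
    ∃ C₁ : ℝ, 0 < C₁ ∧
      ∀ (δ : ℝ), 0 < δ → ∀ y y' : EuclideanSpace ℝ (Fin d),
        ‖∫ x, ((if x - y = 0 then 0 else
              K (x - y) * (((‖x - y‖ / max δ ‖x - y‖) ^ (s + α) : ℝ) : ℂ))
            - (if x - y' = 0 then 0 else
              K (x - y') * (((‖x - y'‖ / max δ ‖x - y'‖) ^ (s + α) : ℝ) : ℂ))) ∂μ‖
          ≤ C₁ * ‖y - y'‖ ^ α / δ ^ α :=
  stmt7_general d s α Kstar Λ hs hα0 hα1 hKstar hΛ μ hμ K hKbd hKsm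
end

section
/- Let μ be a Λ-nice measure, K an s-dimensional CZ kernel, and K^δ = K − K_δ the localized kernel. Fix x ∈ ℝ^d, r > 0, δ > 0, and A > 1. If f is Lipschitz, compactly supported in B(x, r+2δ), satisfies 0 ≤ f ≤ 1 on ℝ^d, f ≡ 1 on B(x, r+δ), and ‖f‖_{Lip} ≤ A/δ, then |∬ K^δ(z−y) H_{f, 1−f}(z,y) dμ(z) dμ(y)| ≤ C_3 A · μ(B(x, r+2δ) \ B(x,r)), where H_{f,g}(z,y) = (1/2)[f(y)g(z) − f(z)g(y)] and C_3 depends only on d, s, Λ. -/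
/-!
Since `H_{f,1-f}(z,y) = (f y - f z) / 2` and `K^δ` vanishes off `‖z - y‖ < δ`, the Lipschitz
bound gives `|K^δ(z - y) H(z,y)| ≤ (A / 2δ) ‖z - y‖^{1-s} 1_{‖z - y‖ < δ}`. As `f = 1` on
`B(x, r + δ)` and `f = 0` off `B(x, r + 2δ)`, a pair with `‖z - y‖ < δ` and `f z ≠ f y` has a point
in the annulus `S = B(x, r + 2δ) \ B(x, r)`, so the integrand is dominated by `(1_S(z) + 1_S(y))`
times that kernel. By Tonelli the double integral is then at most `2 μ(S)` times the kernel's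
`μ`-mass around a point, which is `≲ Λ δ` by summing the growth bound `μ(B(z, ρ)) ≤ Λ ρ^s` over
dyadic annuli.
-/
open MeasureTheory Metric Set Function ENNReal

theorem rpow_one_sub_le_of_half_lt {s ρ t : ℝ} (hs : 0 ≤ s) (hρt : ρ / 2 < t) (htρ : t ≤ ρ) :
    t ^ (1 - s) ≤ 2 ^ s * ρ ^ (1 - s) := by
  have hρ : 0 < ρ := by linarith
  have ht : 0 < t := by linarith
  calc t ^ (1 - s) = t / t ^ s := by rw [Real.rpow_sub ht, Real.rpow_one]
    _ ≤ ρ / (ρ / 2) ^ s := by gcongr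
    _ = 2 ^ s * ρ ^ (1 - s) := by
      rw [Real.div_rpow hρ.le zero_le_two, Real.rpow_sub hρ, Real.rpow_one]
      field_simp

section Growth

variable {X : Type*} [PseudoMetricSpace X] [MeasurableSpace X] [OpensMeasurableSpace X]

/-- Summing over the dyadic annuli `δ 2^{-k-1} < dist y z ≤ δ 2^{-k}` of mass `≲ Λ (δ 2^{-k})^s`. -/
theorem lintegral_indicator_rpow_dist_le {μ : Measure X} {s Λ δ : ℝ} (hs : 0 ≤ s) (hΛ : 0 ≤ Λ)
    (hδ : 0 < δ) (hμ : ∀ (z : X) (ρ : ℝ), 0 < ρ → μ (ball z ρ) ≤ ENNReal.ofReal (Λ * ρ ^ s))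
    (z : X) :
    ∫⁻ y, ENNReal.ofReal ((Ioo 0 δ).indicator (fun t => t ^ (1 - s)) (dist y z)) ∂μ
      ≤ ENNReal.ofReal (2 * 4 ^ s * Λ * δ) := by
  set ρ : ℕ → ℝ := fun k => δ * (1 / 2) ^ k with hρ_def
  have hρ : ∀ k, 0 < ρ k := fun k => by positivity
  have hρ_succ : ∀ k, ρ (k + 1) = ρ k / 2 := fun k => by simp only [hρ_def, pow_succ]; ring
  set annulus : ℕ → Set X := fun k => closedBall z (ρ k) \ closedBall z (ρ (k + 1))
  have h_cover : ∀ y, ENNReal.ofReal ((Ioo 0 δ).indicator (fun t => t ^ (1 - s)) (dist y z))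
      ≤ ∑' k, (annulus k).indicator (fun _ => ENNReal.ofReal (2 ^ s * ρ k ^ (1 - s))) y := by
    intro y
    by_cases hy : dist y z ∈ Ioo 0 δ
    · obtain ⟨k, hk_lt, hk_le⟩ := exists_nat_pow_near_of_lt_one (div_pos hy.1 hδ)
        ((div_le_one hδ).2 hy.2.le) one_half_pos one_half_lt_one
      have hlt : ρ (k + 1) < dist y z := by rwa [lt_div_iff₀' hδ] at hk_lt
      have hle : dist y z ≤ ρ k := by rwa [div_le_iff₀' hδ] at hk_le
      refine le_trans ?_ (ENNReal.le_tsum k)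
      rw [indicator_of_mem hy, indicator_of_mem (show y ∈ annulus k from
        ⟨mem_closedBall.2 hle, fun h => hlt.not_ge h⟩)]
      exact ENNReal.ofReal_le_ofReal
        (rpow_one_sub_le_of_half_lt hs (hρ_succ k ▸ hlt) hle)
    · simp [indicator_of_notMem hy]
  have h_annulus : ∀ k, μ (annulus k) ≤ ENNReal.ofReal (Λ * (2 * ρ k) ^ s) := fun k =>
    calc μ (annulus k) ≤ μ (ball z (2 * ρ k)) :=
          measure_mono (sdiff_subset.trans (closedBall_subset_ball (by linarith [hρ k])))
      _ ≤ _ := hμ z _ (by linarith [hρ k])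
  have h_term : ∀ k, 2 ^ s * ρ k ^ (1 - s) * (Λ * (2 * ρ k) ^ s) = 4 ^ s * Λ * δ * (1 / 2) ^ k := by
    intro k
    have h4 : (4 : ℝ) ^ s = 2 ^ s * 2 ^ s := by
      rw [← Real.mul_rpow zero_le_two zero_le_two]; norm_num
    rw [Real.mul_rpow zero_le_two (hρ k).le, Real.rpow_sub (hρ k), Real.rpow_one, h4]
    field_simp [(Real.rpow_pos_of_pos (hρ k) s).ne']
    simp only [hρ_def]
    ring
  calc ∫⁻ y, ENNReal.ofReal ((Ioo 0 δ).indicator (fun t => t ^ (1 - s)) (dist y z)) ∂μ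
      ≤ ∫⁻ y, ∑' k, (annulus k).indicator (fun _ => ENNReal.ofReal (2 ^ s * ρ k ^ (1 - s))) y ∂μ :=
        lintegral_mono h_cover
    _ = ∑' k, ENNReal.ofReal (2 ^ s * ρ k ^ (1 - s)) * μ (annulus k) := by
        have h_meas : ∀ k, MeasurableSet (annulus k) :=
          fun k => measurableSet_closedBall.diff measurableSet_closedBall
        rw [lintegral_tsum fun k => (measurable_const.indicator (h_meas k)).aemeasurable]
        simp only [lintegral_indicator_const (h_meas _)]
    _ ≤ ∑' k, ENNReal.ofReal (4 ^ s * Λ * δ * (1 / 2) ^ k) := by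
        refine ENNReal.tsum_le_tsum fun k => ?_
        rw [← h_term, ENNReal.ofReal_mul (by positivity : 0 ≤ 2 ^ s * ρ k ^ (1 - s))]
        exact mul_le_mul_right (h_annulus k) _
    _ = ENNReal.ofReal (2 * 4 ^ s * Λ * δ) := by
        rw [← ENNReal.ofReal_tsum_of_nonneg (fun k => by positivity)
          (summable_geometric_two.mul_left _), tsum_mul_left, tsum_geometric_two, mul_comm]
        ring_nf

end Growth

section Schur

variable {X : Type*} [MeasurableSpace X] {μ : Measure X} [SFinite μ]

theorem lintegral_lintegral_indicator_add_mul_le {q : X → X → ℝ≥0∞} (hq : Measurable (uncurry q))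
    {c : ℝ≥0∞} (hq_left : ∀ z, ∫⁻ y, q z y ∂μ ≤ c) (hq_right : ∀ y, ∫⁻ z, q z y ∂μ ≤ c)
    {S : Set X} (hS : MeasurableSet S) :
    ∫⁻ z, ∫⁻ y, (S.indicator 1 z + S.indicator 1 y) * q z y ∂μ ∂μ ≤ 2 * c * μ S := by
  have hS_one : Measurable (S.indicator (1 : X → ℝ≥0∞)) := measurable_one.indicator hS
  have h_right : Measurable (uncurry fun z y => S.indicator 1 y * q z y) :=
    (hS_one.comp measurable_snd).mul hq
  have h_first : ∫⁻ z, ∫⁻ y, S.indicator 1 z * q z y ∂μ ∂μ ≤ c * μ S :=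
    calc ∫⁻ z, ∫⁻ y, S.indicator 1 z * q z y ∂μ ∂μ
        = ∫⁻ z, S.indicator 1 z * ∫⁻ y, q z y ∂μ ∂μ := by
          simp_rw [lintegral_const_mul _ (hq.of_uncurry_left)]
      _ ≤ ∫⁻ z, S.indicator 1 z * c ∂μ := lintegral_mono fun z => mul_le_mul_right (hq_left z) _
      _ = c * μ S := by rw [lintegral_mul_const _ hS_one, lintegral_indicator_one hS, mul_comm]
  have h_second : ∫⁻ z, ∫⁻ y, S.indicator 1 y * q z y ∂μ ∂μ ≤ c * μ S :=
    calc ∫⁻ z, ∫⁻ y, S.indicator 1 y * q z y ∂μ ∂μ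
        = ∫⁻ y, S.indicator 1 y * ∫⁻ z, q z y ∂μ ∂μ := by
          rw [lintegral_lintegral_swap h_right.aemeasurable]
          simp_rw [lintegral_const_mul _ (hq.of_uncurry_right)]
      _ ≤ ∫⁻ y, S.indicator 1 y * c ∂μ := lintegral_mono fun y => mul_le_mul_right (hq_right y) _
      _ = c * μ S := by rw [lintegral_mul_const _ hS_one, lintegral_indicator_one hS, mul_comm]
  calc ∫⁻ z, ∫⁻ y, (S.indicator 1 z + S.indicator 1 y) * q z y ∂μ ∂μ
      = ∫⁻ z, ∫⁻ y, S.indicator 1 z * q z y ∂μ ∂μ + ∫⁻ z, ∫⁻ y, S.indicator 1 y * q z y ∂μ ∂μ := by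
        simp_rw [add_mul]
        have h_inner : Measurable fun z => ∫⁻ y, S.indicator 1 y * q z y ∂μ :=
          h_right.lintegral_prod_right'
        rw [← lintegral_add_right _ h_inner]
        exact lintegral_congr fun z =>
          lintegral_add_left ((hS_one.comp measurable_const).mul hq.of_uncurry_left) _
    _ ≤ 2 * c * μ S := by
        rw [two_mul, add_mul]
        exact add_le_add h_first h_second

theorem norm_integral_integral_le_of_enorm_le {F : Type*} [NormedAddCommGroup F] [NormedSpace ℝ F]
    {g : X → X → F} {q : X → X → ℝ≥0∞} (hq : Measurable (uncurry q)) {c : ℝ≥0∞} (hc : c ≠ ⊤)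
    (hq_left : ∀ z, ∫⁻ y, q z y ∂μ ≤ c) (hq_right : ∀ y, ∫⁻ z, q z y ∂μ ≤ c)
    {S : Set X} (hS : MeasurableSet S) (hS_fin : μ S ≠ ⊤)
    (hg : ∀ z y, ‖g z y‖ₑ ≤ (S.indicator 1 z + S.indicator 1 y) * q z y) :
    ‖∫ z, ∫ y, g z y ∂μ ∂μ‖ ≤ 2 * c.toReal * (μ S).toReal := by
  have h_enorm : ‖∫ z, ∫ y, g z y ∂μ ∂μ‖ₑ ≤ 2 * c * μ S :=
    calc ‖∫ z, ∫ y, g z y ∂μ ∂μ‖ₑ ≤ ∫⁻ z, ‖∫ y, g z y ∂μ‖ₑ ∂μ := enorm_integral_le_lintegral_enorm _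
      _ ≤ ∫⁻ z, ∫⁻ y, ‖g z y‖ₑ ∂μ ∂μ := lintegral_mono fun z => enorm_integral_le_lintegral_enorm _
      _ ≤ ∫⁻ z, ∫⁻ y, (S.indicator 1 z + S.indicator 1 y) * q z y ∂μ ∂μ :=
          lintegral_mono fun z => lintegral_mono (hg z)
      _ ≤ 2 * c * μ S := lintegral_lintegral_indicator_add_mul_le hq hq_left hq_right hS
  rw [← toReal_enorm]
  simpa [ENNReal.toReal_mul] using ENNReal.toReal_mono (by finiteness) h_enorm

end Schur

section Kernel

variable {E : Type*} [NormedAddCommGroup E] [DecidableEq E]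

/-- The part `K^δ = K - K_δ` of the kernel near the diagonal, with the value `0` at the origin. -/
noncomputable def localizedKernel (K : E → ℂ) (s α δ : ℝ) (w : E) : ℂ :=
  if w = 0 then 0 else K w * ((1 - (‖w‖ / max δ ‖w‖) ^ (s + α) : ℝ) : ℂ)

theorem localizedKernel_eq_zero_of_le {K : E → ℂ} {s α δ : ℝ} {w : E} (hw : δ ≤ ‖w‖) :
    localizedKernel K s α δ w = 0 := by
  by_cases h0 : w = 0
  · simp [localizedKernel, h0]
  · simp [localizedKernel, h0, max_eq_right hw]

theorem norm_localizedKernel_mul_norm_le {K : E → ℂ} {s α : ℝ}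
    (hK : ∀ w, w ≠ 0 → ‖K w‖ ≤ (‖w‖ ^ s)⁻¹) (hsα : 0 ≤ s + α) (δ : ℝ) (w : E) :
    ‖localizedKernel K s α δ w‖ * ‖w‖ ≤ (Ioo 0 δ).indicator (fun t => t ^ (1 - s)) ‖w‖ := by
  by_cases h0 : w = 0
  · simp [localizedKernel, h0]
  by_cases hδ : δ ≤ ‖w‖
  · rw [localizedKernel_eq_zero_of_le hδ, norm_zero, zero_mul]
    exact indicator_nonneg (fun t ht => Real.rpow_nonneg ht.1.le _) _
  have hw : 0 < ‖w‖ := norm_pos_iff.2 h0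
  have hwδ : ‖w‖ < δ := not_le.1 hδ
  have hratio : (‖w‖ / max δ ‖w‖) ^ (s + α) ∈ Icc (0 : ℝ) 1 := by
    have hδ0 : 0 < δ := hw.trans hwδ
    rw [max_eq_left hwδ.le]
    exact ⟨by positivity, Real.rpow_le_one (by positivity) ((div_le_one₀ hδ0).2 hwδ.le) hsα⟩
  rw [indicator_of_mem (show ‖w‖ ∈ Ioo 0 δ from ⟨hw, hwδ⟩), localizedKernel, if_neg h0, norm_mul,
    Complex.norm_real, Real.norm_of_nonneg (by linarith [hratio.2])]
  calc ‖K w‖ * (1 - (‖w‖ / max δ ‖w‖) ^ (s + α)) * ‖w‖ ≤ (‖w‖ ^ s)⁻¹ * 1 * ‖w‖ := by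
        gcongr
        · linarith [hratio.2]
        · exact hK w h0
        · linarith [hratio.1]
    _ = ‖w‖ ^ (1 - s) := by rw [Real.rpow_sub hw, Real.rpow_one]; field_simp

/-- `H_{f,1-f}(z,y) = (f y - f z) / 2`, so the Lipschitz bound on `f` cancels one power of
`‖z - y‖`. -/
theorem norm_localizedKernel_mul_antisymm_le {K : E → ℂ} {s α δ L : ℝ}
    (hK : ∀ w, w ≠ 0 → ‖K w‖ ≤ (‖w‖ ^ s)⁻¹) (hsα : 0 ≤ s + α) (hL : 0 ≤ L) {f : E → ℝ}
    (hf : ∀ z w, |f z - f w| ≤ L * ‖z - w‖) (z y : E) :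
    ‖localizedKernel K s α δ (z - y)
        * (((1 : ℝ) / 2 * (f y * (1 - f z) - f z * (1 - f y)) : ℝ) : ℂ)‖
      ≤ L / 2 * (Ioo 0 δ).indicator (fun t => t ^ (1 - s)) ‖z - y‖ := by
  have hH : |(1 : ℝ) / 2 * (f y * (1 - f z) - f z * (1 - f y))| ≤ L / 2 * ‖z - y‖ := by
    rw [show (1 : ℝ) / 2 * (f y * (1 - f z) - f z * (1 - f y)) = (f z - f y) / (-2) by ring,
      abs_div]
    norm_num
    linarith [hf z y]
  rw [norm_mul, Complex.norm_real, Real.norm_eq_abs]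
  calc ‖localizedKernel K s α δ (z - y)‖ * |1 / 2 * (f y * (1 - f z) - f z * (1 - f y))|
      ≤ ‖localizedKernel K s α δ (z - y)‖ * (L / 2 * ‖z - y‖) := by gcongr
    _ = L / 2 * (‖localizedKernel K s α δ (z - y)‖ * ‖z - y‖) := by ring
    _ ≤ _ := by gcongr; exact norm_localizedKernel_mul_norm_le hK hsα δ (z - y)

end Kernel

theorem mem_annulus_or_mem_annulus_of_ne {X : Type*} [PseudoMetricSpace X] {f : X → ℝ} {x : X}
    {r δ : ℝ} (hf_one : ∀ z ∈ ball x (r + δ), f z = 1) (hf_supp : tsupport f ⊆ ball x (r + 2 * δ))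
    {z y : X} (hzy : dist z y < δ) (hne : f z ≠ f y) :
    z ∈ ball x (r + 2 * δ) \ ball x r ∨ y ∈ ball x (r + 2 * δ) \ ball x r := by
  have h_one : ∀ u v, dist u v < δ → u ∈ ball x r → f u = 1 ∧ f v = 1 := fun u v huv hu => by
    rw [mem_ball] at hu
    refine ⟨hf_one u (mem_ball.2 (by linarith [dist_nonneg (x := u) (y := v)])),
      hf_one v (mem_ball.2 ?_)⟩
    linarith [dist_triangle v u x, dist_comm u v]
  have h_zero : ∀ u, u ∉ ball x (r + 2 * δ) → f u = 0 :=
    fun u hu => image_eq_zero_of_notMem_tsupport fun h => hu (hf_supp h)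
  by_contra h
  simp only [mem_sdiff, not_or, not_and, not_not] at h
  by_cases hz : z ∈ ball x r
  · obtain ⟨hfz, hfy⟩ := h_one z y hzy hz
    exact hne (hfz.trans hfy.symm)
  by_cases hy : y ∈ ball x r
  · obtain ⟨hfy, hfz⟩ := h_one y z (dist_comm y z ▸ hzy) hy
    exact hne (hfz.trans hfy.symm)
  exact hne ((h_zero z fun h' => hz (h.1 h')).trans (h_zero y fun h' => hy (h.2 h')).symm)

theorem mem_annulus_of_localizedKernel_mul_ne_zero {E : Type*} [NormedAddCommGroup E]
    [DecidableEq E] {K : E → ℂ} {s α δ r : ℝ} {x : E} {f : E → ℝ}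
    (hf_one : ∀ z ∈ ball x (r + δ), f z = 1) (hf_supp : tsupport f ⊆ ball x (r + 2 * δ)) {z y : E}
    (h : localizedKernel K s α δ (z - y)
      * (((1 : ℝ) / 2 * (f y * (1 - f z) - f z * (1 - f y)) : ℝ) : ℂ) ≠ 0) :
    z ∈ ball x (r + 2 * δ) \ ball x r ∨ y ∈ ball x (r + 2 * δ) \ ball x r := by
  have hzy : dist z y < δ := by
    rw [dist_eq_norm]
    by_contra hle
    exact h (by rw [localizedKernel_eq_zero_of_le (not_lt.1 hle), zero_mul])
  have hne : f z ≠ f y := fun heq => h (by simp [heq])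
  exact mem_annulus_or_mem_annulus_of_ne hf_one hf_supp hzy hne

theorem enorm_le_indicator_add_mul_of_ne_zero {F X : Type*} [NormedAddCommGroup F] {S : Set X}
    {z y : X} {a : F} {b : ℝ} (hab : ‖a‖ ≤ b) (hS : a ≠ 0 → z ∈ S ∨ y ∈ S) :
    ‖a‖ₑ ≤ (S.indicator 1 z + S.indicator 1 y) * ENNReal.ofReal b := by
  rcases eq_or_ne a 0 with rfl | ha
  · simp
  have h_one : 1 ≤ S.indicator (1 : X → ℝ≥0∞) z + S.indicator 1 y := by
    rcases hS ha with h | h <;> simp [indicator_of_mem h]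
  calc ‖a‖ₑ = ENNReal.ofReal ‖a‖ := (ofReal_norm a).symm
    _ ≤ 1 * ENNReal.ofReal b := by rw [one_mul]; exact ENNReal.ofReal_le_ofReal hab
    _ ≤ _ := by gcongr

theorem stmt10_general (d : ℕ) (s α Λ : ℝ) (hs : 0 < s) (hα0 : 0 < α) (hΛ : 0 < Λ) :
    ∃ C₃ : ℝ, 0 < C₃ ∧
      ∀ (μ : Measure (EuclideanSpace ℝ (Fin d))),
        (∀ (z : EuclideanSpace ℝ (Fin d)) (ρ : ℝ), 0 < ρ →
          μ (ball z ρ) ≤ ENNReal.ofReal (Λ * ρ ^ s)) →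
        ∀ (K : EuclideanSpace ℝ (Fin d) → ℂ),
          (∀ z, z ≠ 0 → ‖K z‖ ≤ (‖z‖ ^ s)⁻¹) →
          (∀ z, K (-z) = -K z) →
          ∀ (x : EuclideanSpace ℝ (Fin d)) (r δ A : ℝ), 0 < r → 0 < δ → 1 < A →
            ∀ f : EuclideanSpace ℝ (Fin d) → ℝ,
              HasCompactSupport f → tsupport f ⊆ ball x (r + 2 * δ) →
              (∀ z, 0 ≤ f z ∧ f z ≤ 1) →
              (∀ z ∈ ball x (r + δ), f z = 1) →
              (∀ z w, |f z - f w| ≤ (A / δ) * ‖z - w‖) →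
              ‖∫ z, ∫ y,
                  (if z - y = 0 then 0 else
                      K (z - y) * ((1 - (‖z - y‖ / max δ ‖z - y‖) ^ (s + α) : ℝ) : ℂ))
                    * ((((1 : ℝ) / 2) * (f y * (1 - f z) - f z * (1 - f y)) : ℝ) : ℂ) ∂μ ∂μ‖
                ≤ C₃ * A * (μ (ball x (r + 2 * δ) \ ball x r)).toReal := by
  refine ⟨2 * 4 ^ s * Λ, by positivity, ?_⟩
  intro μ hμ K hK _ x r δ A hr hδ hA f _ hf_supp _ hf_one hf_lip
  have hμ_fin : ∀ z ρ, 0 < ρ → μ (ball z ρ) < ⊤ :=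
    fun z ρ hρ => (hμ z ρ hρ).trans_lt ofReal_lt_top
  have : IsLocallyFiniteMeasure μ :=
    ⟨fun z => ⟨ball z 1, ball_mem_nhds z one_pos, hμ_fin z 1 one_pos⟩⟩
  have hS_fin : μ (ball x (r + 2 * δ) \ ball x r) ≠ ⊤ :=
    ((measure_mono sdiff_subset).trans_lt (hμ_fin x _ (by positivity))).ne
  set q : EuclideanSpace ℝ (Fin d) → EuclideanSpace ℝ (Fin d) → ℝ≥0∞ := fun z y =>
    ENNReal.ofReal (A / δ / 2 * (Ioo 0 δ).indicator (fun t => t ^ (1 - s)) (dist z y))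
  have hq : Measurable (uncurry q) :=
    (measurable_const.mul (((measurable_id.pow_const _).indicator measurableSet_Ioo).comp
      measurable_dist)).ennreal_ofReal
  have hq_right : ∀ z, ∫⁻ y, q y z ∂μ ≤ ENNReal.ofReal (A / δ / 2 * (2 * 4 ^ s * Λ * δ)) := by
    intro z
    simp_rw [q, ENNReal.ofReal_mul (by positivity : 0 ≤ A / δ / 2)]
    rw [lintegral_const_mul' _ _ ofReal_ne_top]
    exact mul_le_mul_right (lintegral_indicator_rpow_dist_le hs.le hΛ.le hδ hμ z) _
  have hq_left : ∀ z, ∫⁻ y, q z y ∂μ ≤ ENNReal.ofReal (A / δ / 2 * (2 * 4 ^ s * Λ * δ)) := by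
    simpa only [q, dist_comm] using hq_right
  have hg : ∀ z y, ‖localizedKernel K s α δ (z - y)
      * (((1 : ℝ) / 2 * (f y * (1 - f z) - f z * (1 - f y)) : ℝ) : ℂ)‖ₑ
      ≤ ((ball x (r + 2 * δ) \ ball x r).indicator 1 z
        + (ball x (r + 2 * δ) \ ball x r).indicator 1 y) * q z y := fun z y =>
    enorm_le_indicator_add_mul_of_ne_zero
      (dist_eq_norm z y ▸ norm_localizedKernel_mul_antisymm_le hK (by linarith) (by positivity)
        hf_lip z y)
      (mem_annulus_of_localizedKernel_mul_ne_zero hf_one hf_supp)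
  refine (norm_integral_integral_le_of_enorm_le hq ofReal_ne_top hq_left hq_right
    (measurableSet_ball.diff measurableSet_ball) hS_fin hg).trans_eq ?_
  rw [ENNReal.toReal_ofReal (by positivity)]
  field_simp

/-- For a `Λ`-nice measure `μ` and the localized kernel `K^δ = K − K_δ`, if
`f` is Lipschitz with constant `A/δ`, `0 ≤ f ≤ 1`, supported in `B(x,r+2δ)` and `f ≡ 1`
on `B(x,r+δ)`, then `|∬ K^δ(z−y) H_{f,1−f}(z,y) dμ dμ| ≤ C₃ A μ(B(x,r+2δ) \ B(x,r))`
with `C₃ = C₃(d,s,Λ)`. -/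
theorem stmt10 (d : ℕ) (hd : 2 ≤ d) (s α Λ : ℝ) (hs : 0 < s) (hsd : s < d)
    (hα0 : 0 < α) (hα1 : α ≤ 1) (hΛ : 0 < Λ) :
    ∃ C₃ : ℝ, 0 < C₃ ∧
      ∀ (μ : Measure (EuclideanSpace ℝ (Fin d))),
        (∀ (z : EuclideanSpace ℝ (Fin d)) (ρ : ℝ), 0 < ρ →
          μ (ball z ρ) ≤ ENNReal.ofReal (Λ * ρ ^ s)) →
        ∀ (K : EuclideanSpace ℝ (Fin d) → ℂ),
          (∀ z, z ≠ 0 → ‖K z‖ ≤ (‖z‖ ^ s)⁻¹) →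
          (∀ z, K (-z) = -K z) →
          ∀ (x : EuclideanSpace ℝ (Fin d)) (r δ A : ℝ), 0 < r → 0 < δ → 1 < A →
            ∀ f : EuclideanSpace ℝ (Fin d) → ℝ,
              HasCompactSupport f → tsupport f ⊆ ball x (r + 2 * δ) →
              (∀ z, 0 ≤ f z ∧ f z ≤ 1) →
              (∀ z ∈ ball x (r + δ), f z = 1) →
              (∀ z w, |f z - f w| ≤ (A / δ) * ‖z - w‖) →
              ‖∫ z, ∫ y,
                  (if z - y = 0 then 0 else
                      K (z - y) * ((1 - (‖z - y‖ / max δ ‖z - y‖) ^ (s + α) : ℝ) : ℂ))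
                    * ((((1 : ℝ) / 2) * (f y * (1 - f z) - f z * (1 - f y)) : ℝ) : ℂ) ∂μ ∂μ‖
                ≤ C₃ * A * (μ (ball x (r + 2 * δ) \ ball x r)).toReal :=
  stmt10_general d s α Λ hs hα0 hΛ
end
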